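/- arXiv:1608.02389 — 9 statements merged into one kernel-verified Lean document; each statement's English description precedes it below -/
import Mathlib

section
/- If X and X' are distinct non-equivalent connected components of G − C with X ▷ X' and X' ▷ X, then X = X'; equivalently, mutual comparability under ▷ implies the components are equivalent. -/
variable {V : Type}

/-- Neighbourhood of a vertex `u` inside a set `C`. -/
def nbhdIn (G : SimpleGraph V) (C : Set V) (u : V) : Set V := {v ∈ C | G.Adj u v}

/-- Neighbourhood of a set `X` inside `C`. -/
def nbhdSet (G : SimpleGraph V) (C : Set V) (X : Set V) : Set V := ⋃ u ∈ X, nbhdIn G C u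

/-- The relation `X ▷ X'`. -/
def Dominates (G : SimpleGraph V) (C : Set V) (X X' : Set V) : Prop :=
  ∀ u ∈ X, nbhdSet G C X' ⊆ nbhdIn G C u

/-- `X` is (the vertex set of) a connected component of `G - C`. -/
def IsCompOf (G : SimpleGraph V) (C : Set V) (X : Set V) : Prop :=
  ∃ c : (G.induce (Cᶜ : Set V)).ConnectedComponent, X = Subtype.val '' c.supp

/-- Two components are equivalent: all their vertices have the same neighbourhood `C' ⊆ C`. -/
def CompEquiv (G : SimpleGraph V) (C : Set V) (X X' : Set V) : Prop :=
  ∃ C' ⊆ C, (∀ u ∈ X, nbhdIn G C u = C') ∧ (∀ u ∈ X', nbhdIn G C u = C')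


/-- Mutual comparability under `▷` implies that the components are equivalent; in particular
distinct non-equivalent components cannot satisfy `X ▷ X'` and `X' ▷ X` unless `X = X'`. -/
theorem mutual_dominates_equiv (G : SimpleGraph V) (C : Set V) (hC : G.IsClique C)
    (X X' : Set V) (hX : IsCompOf G C X) (hX' : IsCompOf G C X')
    (h1 : Dominates G C X X') (h2 : Dominates G C X' X) :
    CompEquiv G C X X' ∧ (¬ CompEquiv G C X X' → X = X') := by
  -- components are nonempty
  obtain ⟨c, rfl⟩ := hX
  obtain ⟨c', rfl⟩ := hX'
  obtain ⟨v, hv⟩ := c.exists_rep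
  obtain ⟨v', hv'⟩ := c'.exists_rep
  have hvX : (v : V) ∈ Subtype.val '' c.supp := ⟨v, hv, rfl⟩
  have hv'X : (v' : V) ∈ Subtype.val '' c'.supp := ⟨v', hv', rfl⟩
  set X := Subtype.val '' c.supp
  set X' := Subtype.val '' c'.supp
  have hsub : ∀ u ∈ X, nbhdIn G C u ⊆ nbhdSet G C X := by
    intro u hu
    exact Set.subset_biUnion_of_mem hu
  have hsub' : ∀ u ∈ X', nbhdIn G C u ⊆ nbhdSet G C X' := by
    intro u hu
    exact Set.subset_biUnion_of_mem hu
  have key : CompEquiv G C X X' := by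
    refine ⟨nbhdIn G C (v' : V), ?_, ?_, ?_⟩
    · intro x hx; exact hx.1
    · intro u hu
      apply Set.Subset.antisymm
      · exact (hsub u hu).trans (h2 _ hv'X)
      · exact (hsub' _ hv'X).trans (h1 u hu)
    · intro u hu
      apply Set.Subset.antisymm
      · exact ((hsub' u hu).trans (h1 _ hvX)).trans ((hsub _ hvX).trans (h2 _ hv'X))
      · exact ((hsub' _ hv'X).trans (h1 _ hvX)).trans ((hsub _ hvX).trans (h2 u hu))
  exact ⟨key, fun h => absurd key h⟩
end

section
/- The relation ▷ on connected components of G − C is transitive: if X ▷ X' and X' ▷ X'', then X ▷ X''. -/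
variable {V : Type}

theorem IsCompOf.nonempty {G : SimpleGraph V} {C X : Set V} (hX : IsCompOf G C X) :
    X.Nonempty := by
  obtain ⟨c, rfl⟩ := hX
  exact c.nonempty_supp.image _

theorem nbhdIn_subset_nbhdSet {G : SimpleGraph V} {C X : Set V} {u : V} (hu : u ∈ X) :
    nbhdIn G C u ⊆ nbhdSet G C X :=
  Set.subset_biUnion_of_mem (u := fun u => nbhdIn G C u) hu

theorem Dominates.trans {G : SimpleGraph V} {C X X' X'' : Set V} (h1 : Dominates G C X X')
    (h2 : Dominates G C X' X'') (hX' : X'.Nonempty) : Dominates G C X X'' := by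
  obtain ⟨w, hw⟩ := hX'
  intro u hu
  exact (h2 w hw).trans ((nbhdIn_subset_nbhdSet hw).trans (h1 u hu))

theorem dominates_trans_general (G : SimpleGraph V) (C : Set V)
    (X X' X'' : Set V) (hX' : IsCompOf G C X')
    (h1 : Dominates G C X X') (h2 : Dominates G C X' X'') :
    Dominates G C X X'' :=
  h1.trans h2 hX'.nonempty

/-- The relation `▷` on connected components of `G - C` is transitive. -/
theorem dominates_trans (G : SimpleGraph V) (C : Set V) (hC : G.IsClique C)
    (X X' X'' : Set V) (hX : IsCompOf G C X) (hX' : IsCompOf G C X')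
    (hX'' : IsCompOf G C X'')
    (h1 : Dominates G C X X') (h2 : Dominates G C X' X'') :
    Dominates G C X X'' :=
  dominates_trans_general G C X X' X'' hX' h1 h2
end

section
/- If an interval graph H = G[C ∪ V(X_1) ∪ ⋯ ∪ V(X_k)] has an interval representation in which C is the leftmost maximal clique and the components X_1, …, X_k are placed in this order from left to right (their representations are pairwise non-overlapping intervals of the real line), then for all i < j we have X_i ▷ X_j, i.e., every vertex of N_C(X_j) is adjacent to every vertex of X_i. -/
variable {V : Type}

/-- `C` is a maximal clique of `G`. -/
def IsMaxClique (G : SimpleGraph V) (C : Set V) : Prop :=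
  G.IsClique C ∧ ∀ D, G.IsClique D → C ⊆ D → C = D

/-- `l, r` give an interval representation of the induced subgraph `G[S]`:
each vertex of `S` gets the closed interval `[l v, r v]`, and two distinct vertices of `S`
are adjacent iff their intervals intersect. -/
def RepOn (G : SimpleGraph V) (S : Set V) (l r : V → ℝ) : Prop :=
  (∀ u ∈ S, l u ≤ r u) ∧
  ∀ u ∈ S, ∀ v ∈ S, u ≠ v →
    (G.Adj u v ↔ (Set.Icc (l u) (r u) ∩ Set.Icc (l v) (r v)).Nonempty)

/-- In the representation of `G[S]`, the clique `C` is leftmost: all vertices of `C`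
have intervals starting at a common point `x₀` lying strictly to the left of
every other interval. -/
def LeftmostClique (S C : Set V) (l r : V → ℝ) : Prop :=
  ∃ x₀ : ℝ, (∀ v ∈ C, l v = x₀) ∧ ∀ u ∈ S, u ∉ C → x₀ < l u

/-- If `G[C ∪ X₁ ∪ ⋯ ∪ Xₖ]` has an interval representation with `C` leftmost and the
components placed in order (pairwise non-overlapping, left to right), then `Xᵢ ▷ Xⱼ`
for all `i < j`. -/
theorem order_of_components (G : SimpleGraph V) (C : Set V) (hC : IsMaxClique G C)
    (k : ℕ) (X : Fin k → Set V) (hX : ∀ i, IsCompOf G C (X i))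
    (l r : V → ℝ)
    (hrep : RepOn G (C ∪ ⋃ i, X i) l r)
    (hleft : LeftmostClique (C ∪ ⋃ i, X i) C l r)
    (horder : ∀ i j : Fin k, i < j → ∀ u ∈ X i, ∀ v ∈ X j, r u < l v) :
    ∀ i j : Fin k, i < j → Dominates G C (X i) (X j) := by
  intro i j hij u hu w hw
  obtain ⟨x₀, hx₀, hx₀'⟩ := hleft
  obtain ⟨hle, hadj⟩ := hrep
  -- w ∈ C and w is adjacent to some v ∈ X j
  simp only [nbhdSet, Set.mem_iUnion] at hw
  obtain ⟨v, hv, hwC, hvw⟩ := hw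
  -- members of components are not in C
  have hnotC : ∀ i' : Fin k, ∀ x ∈ X i', x ∉ C := by
    intro i' x hx
    obtain ⟨c, hc⟩ := hX i'
    rw [hc] at hx
    obtain ⟨⟨y, hy⟩, _, rfl⟩ := hx
    exact hy
  have huC : u ∉ C := hnotC i u hu
  have hvC : v ∉ C := hnotC j v hv
  have huS : u ∈ C ∪ ⋃ i, X i := Or.inr (Set.mem_iUnion.2 ⟨i, hu⟩)
  have hvS : v ∈ C ∪ ⋃ i, X i := Or.inr (Set.mem_iUnion.2 ⟨j, hv⟩)
  have hwS : w ∈ C ∪ ⋃ i, X i := Or.inl hwC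
  have hvw' : Set.Nonempty (Set.Icc (l v) (r v) ∩ Set.Icc (l w) (r w)) :=
    (hadj v hvS w hwS (fun h => hvC (h ▸ hwC))).1 hvw
  obtain ⟨t, ⟨htv, _⟩, ⟨_, htw⟩⟩ := hvw'
  have h1 : r u < l v := horder i j hij u hu v hv
  have h2 : l w = x₀ := hx₀ w hwC
  have h3 : x₀ < l u := hx₀' u huS huC
  have h4 : l u ≤ r u := hle u huS
  have huw : G.Adj u w := by
    refine (hadj u huS w hwS (fun h => huC (h ▸ hwC))).2 ⟨l u, ⟨le_refl _, h4⟩, ?_, ?_⟩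
    · rw [h2]; exact h3.le
    · exact le_trans h4 (le_trans h1.le (le_trans htv htw))
  exact ⟨hwC, huw⟩
end

section
/- If X_1 ▷ X_2 ▷ ⋯ ▷ X_k is a chain of connected components of G − C and each induced subgraph G[C ∪ V(X_i)] has an interval representation with C being the leftmost clique (i.e., all vertices of C are represented by intervals sharing a common left endpoint), then G[C ∪ V(X_1) ∪ ⋯ ∪ V(X_k)] has an interval representation with C being the leftmost clique. -/
variable {V : Type}

lemma icc_inter_nonempty {a b c d : ℝ} (hab : a ≤ b) (hcd : c ≤ d) :
    (Set.Icc a b ∩ Set.Icc c d).Nonempty ↔ a ≤ d ∧ c ≤ b := by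
  rw [Set.Icc_inter_Icc, Set.nonempty_Icc, max_le_iff, le_min_iff, le_min_iff]
  constructor
  · rintro ⟨⟨_, h2⟩, h3, _⟩; exact ⟨h2, h3⟩
  · rintro ⟨h1, h2⟩; exact ⟨⟨hab, h1⟩, h2, hcd⟩

lemma isCompOf_notMem {G : SimpleGraph V} {C X : Set V} (h : IsCompOf G C X) :
    ∀ u ∈ X, u ∉ C := by
  obtain ⟨c, rfl⟩ := h; rintro u ⟨⟨w, hw⟩, -, rfl⟩; exact hw

lemma isCompOf_eq_of_reachable_aux {G : SimpleGraph V} {C X Y : Set V} (hX : IsCompOf G C X)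
    (hY : IsCompOf G C Y) {u v : V} (hu : u ∈ X) (hv : v ∈ Y)
    (h : ∀ (hu' : u ∈ (Cᶜ : Set V)) (hv' : v ∈ (Cᶜ : Set V)),
      (G.induce (Cᶜ : Set V)).Reachable ⟨u, hu'⟩ ⟨v, hv'⟩) : X = Y := by
  obtain ⟨c, rfl⟩ := hX
  obtain ⟨d, rfl⟩ := hY
  obtain ⟨w, hw, rfl⟩ := hu
  obtain ⟨z, hz, rfl⟩ := hv
  rw [SimpleGraph.ConnectedComponent.mem_supp_iff] at hw hz
  have hcd : c = d := by
    rw [← hw, ← hz]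
    exact SimpleGraph.ConnectedComponent.sound (by simpa using h w.2 z.2)
  rw [hcd]

lemma isCompOf_eq_of_mem {G : SimpleGraph V} {C X Y : Set V} (hX : IsCompOf G C X)
    (hY : IsCompOf G C Y) {u : V} (hu : u ∈ X) (hv : u ∈ Y) : X = Y :=
  isCompOf_eq_of_reachable_aux hX hY hu hv
    (fun hu' hv' => by exact SimpleGraph.Reachable.refl _)

lemma isCompOf_eq_of_adj {G : SimpleGraph V} {C X Y : Set V} (hX : IsCompOf G C X)
    (hY : IsCompOf G C Y) {u v : V} (hu : u ∈ X) (hv : v ∈ Y) (h : G.Adj u v) : X = Y :=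
  isCompOf_eq_of_reachable_aux hX hY hu hv
    (fun hu' hv' => SimpleGraph.Adj.reachable (by simpa using h))

/-- If `X₁ ▷ X₂ ▷ ⋯ ▷ Xₖ` is a chain of connected components of `G - C` and each
`G[C ∪ Xᵢ]` has an interval representation with `C` leftmost, then
`G[C ∪ X₁ ∪ ⋯ ∪ Xₖ]` has an interval representation with `C` leftmost. -/
theorem chain_to_representation (G : SimpleGraph V) (C : Set V) (hC : IsMaxClique G C)
    (k : ℕ) (X : Fin k → Set V) (hX : ∀ i, IsCompOf G C (X i))
    (hdist : ∀ i j : Fin k, i ≠ j → X i ≠ X j)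
    (hchain : ∀ i j : Fin k, i < j → Dominates G C (X i) (X j))
    (hrep : ∀ i, ∃ l r : V → ℝ, RepOn G (C ∪ X i) l r ∧ LeftmostClique (C ∪ X i) C l r) :
    ∃ l r : V → ℝ, RepOn G (C ∪ ⋃ i, X i) l r ∧
      LeftmostClique (C ∪ ⋃ i, X i) C l r := by
  classical
  choose L R hrepOn hlm using hrep
  simp only [LeftmostClique] at hlm
  choose x0 hx0C hx0lt using hlm
  rcases Nat.eq_zero_or_pos k with rfl | hk
  · refine ⟨fun _ => 0, fun _ => 0, ⟨fun u _ => le_refl 0, ?_⟩, 0, fun v _ => rfl, ?_⟩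
    · intro u hu v hv hne
      rw [show (⋃ i : Fin 0, X i) = ∅ from Set.iUnion_of_empty X, Set.union_empty] at hu hv
      constructor
      · intro _; exact ⟨0, ⟨le_refl _, le_refl _⟩, le_refl _, le_refl _⟩
      · intro _; exact hC.1 hu hv hne
    · intro u hu hnc
      rw [show (⋃ i : Fin 0, X i) = ∅ from Set.iUnion_of_empty X, Set.union_empty] at hu
      exact absurd hu hnc
  have hXC : ∀ (i : Fin k), ∀ u ∈ X i, u ∉ C := fun i => isCompOf_notMem (hX i)
  have huniq : ∀ {i j : Fin k} {u : V}, u ∈ X i → u ∈ X j → i = j := by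
    intro i j u hi hj
    by_contra hne
    exact hdist i j hne (isCompOf_eq_of_mem (hX i) (hX j) hi hj)
  have hadjeq : ∀ {i j : Fin k} {u v : V}, u ∈ X i → v ∈ X j → G.Adj u v → i = j := by
    intro i j u v hi hj h
    by_contra hne
    exact hdist i j hne (isCompOf_eq_of_adj (hX i) (hX j) hi hj h)
  obtain ⟨φ, φmono, φlb, φub, φx0⟩ : ∃ φ : Fin k → ℝ → ℝ, (∀ i, StrictMono (φ i)) ∧
      (∀ (i : Fin k) (x : ℝ), ((i : ℕ) : ℝ) + 1/2 < φ i x) ∧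
      (∀ (i : Fin k) (x : ℝ), φ i x < ((i : ℕ) : ℝ) + 3/2) ∧
      (∀ i : Fin k, φ i (x0 i) = ((i : ℕ) : ℝ) + 1) := by
    refine ⟨fun i x => ((i : ℕ) : ℝ) + 1 + (Real.arctan x - Real.arctan (x0 i)) / 8,
      ?_, ?_, ?_, ?_⟩
    · intro i a b hab
      have := Real.arctan_strictMono hab
      dsimp only
      linarith
    · intro i x
      have h1 := Real.arctan_lt_pi_div_two x
      have h2 := Real.neg_pi_div_two_lt_arctan x
      have h3 := Real.arctan_lt_pi_div_two (x0 i)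
      have h4 := Real.neg_pi_div_two_lt_arctan (x0 i)
      have h5 : Real.pi < 3.15 := Real.pi_lt_d2
      dsimp only
      norm_num at h5 ⊢
      linarith
    · intro i x
      have h1 := Real.arctan_lt_pi_div_two x
      have h2 := Real.neg_pi_div_two_lt_arctan x
      have h3 := Real.arctan_lt_pi_div_two (x0 i)
      have h4 := Real.neg_pi_div_two_lt_arctan (x0 i)
      have h5 : Real.pi < 3.15 := Real.pi_lt_d2
      dsimp only
      norm_num at h5 ⊢
      linarith
    · intro i
      dsimp only
      ring
  obtain ⟨l, lC, lX⟩ : ∃ l : V → ℝ, (∀ v ∈ C, l v = 0) ∧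
      (∀ (i : Fin k), ∀ u ∈ X i, l u = φ i (L i u)) := by
    refine ⟨fun u => if u ∈ C then 0
      else if h : ∃ i, u ∈ X i then φ h.choose (L h.choose u) else 0, ?_, ?_⟩
    · intro v hv; simp only [if_pos hv]
    · intro i u hu
      have hex : ∃ j, u ∈ X j := ⟨i, hu⟩
      simp only [if_neg (hXC i u hu), dif_pos hex]
      rw [huniq hex.choose_spec hu]
  obtain ⟨r, rX, rC⟩ : ∃ r : V → ℝ,
      (∀ (i : Fin k), ∀ u ∈ X i, r u = φ i (R i u)) ∧
      (∀ v ∈ C, (r v = 0 ∧ ∀ (j : Fin k), ∀ w ∈ X j, ¬ G.Adj w v) ∨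
        (∃ m : Fin k, r v = φ m (R m v) ∧ (∃ w ∈ X m, G.Adj w v) ∧
          ∀ j : Fin k, (∃ w ∈ X j, G.Adj w v) → (j : ℕ) ≤ (m : ℕ))) := by
    have memJf : ∀ (i : Fin k) (v : V),
        i ∈ Finset.univ.filter (fun i => ∃ w ∈ X i, G.Adj w v) ↔ ∃ w ∈ X i, G.Adj w v := by
      intro i v; simp
    refine ⟨fun v => if v ∈ C then
        (if h : (Finset.univ.filter (fun i => ∃ w ∈ X i, G.Adj w v)).Nonempty
          then φ ((Finset.univ.filter (fun i => ∃ w ∈ X i, G.Adj w v)).max' h)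
            (R ((Finset.univ.filter (fun i => ∃ w ∈ X i, G.Adj w v)).max' h) v)
          else 0)
        else if h : ∃ i, v ∈ X i then φ h.choose (R h.choose v) else 0, ?_, ?_⟩
    · intro i u hu
      have hex : ∃ j, u ∈ X j := ⟨i, hu⟩
      simp only [if_neg (hXC i u hu), dif_pos hex]
      rw [huniq hex.choose_spec hu]
    · intro v hv
      by_cases h : (Finset.univ.filter (fun i => ∃ w ∈ X i, G.Adj w v)).Nonempty
      · right
        refine ⟨(Finset.univ.filter (fun i => ∃ w ∈ X i, G.Adj w v)).max' h, ?_, ?_, ?_⟩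
        · simp only [if_pos hv, dif_pos h]
        · exact (memJf _ v).mp
            ((Finset.univ.filter (fun i => ∃ w ∈ X i, G.Adj w v)).max'_mem h)
        · intro j hj
          exact Fin.le_def.mp (Finset.le_max' _ j ((memJf j v).mpr hj))
      · left
        refine ⟨by simp only [if_pos hv, dif_neg h], ?_⟩
        intro j w hw hadj
        exact h ⟨j, (memJf j v).mpr ⟨w, hw, hadj⟩⟩
  have rCnn : ∀ v ∈ C, 0 ≤ r v := by
    intro v hv
    rcases rC v hv with ⟨h0, -⟩ | ⟨m, hm, -, -⟩
    · rw [h0]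
    · rw [hm]
      have h1 := φlb m (R m v)
      have h2 : (0:ℝ) ≤ ((m : ℕ) : ℝ) := Nat.cast_nonneg _
      linarith
  have lXlb : ∀ (i : Fin k), ∀ u ∈ X i, ((i : ℕ) : ℝ) + 1 < l u := by
    intro i u hu
    rw [lX i u hu]
    have h1 : x0 i < L i u := hx0lt i u (Or.inr hu) (hXC i u hu)
    have h2 := φmono i h1
    rw [φx0 i] at h2
    exact h2
  -- key lemma: u in C, v in some X j
  have keyCX : ∀ u ∈ C, ∀ (j : Fin k), ∀ v ∈ X j,
      (G.Adj u v ↔ (Set.Icc (l u) (r u) ∩ Set.Icc (l v) (r v)).Nonempty) := by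
    intro u huC j v hvX
    have hvnc := hXC j v hvX
    have hlu := lC u huC
    have hlv := lX j v hvX
    have hrv := rX j v hvX
    have hLRv : L j v ≤ R j v := (hrepOn j).1 v (Or.inr hvX)
    have hlrv : l v ≤ r v := by rw [hlv, hrv]; exact (φmono j).monotone hLRv
    have hlvlb := lXlb j v hvX
    have hj0 : (0:ℝ) ≤ ((j : ℕ) : ℝ) := Nat.cast_nonneg _
    rcases rC u huC with ⟨hru, hnone⟩ | ⟨m, hru, hmJ, hmax⟩
    · have hnadj : ¬ G.Adj u v := fun hadj => hnone j v hvX hadj.symm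
      constructor
      · intro h; exact absurd h hnadj
      · rintro ⟨x, ⟨-, hx1⟩, hx2, -⟩
        exfalso
        rw [hru] at hx1
        linarith
    · rcases lt_trichotomy ((j : ℕ)) ((m : ℕ)) with hjm | hjm | hjm
      · -- j < m : adjacent and intervals intersect
        obtain ⟨w, hw, hwu⟩ := hmJ
        have humem : u ∈ nbhdSet G C (X m) :=
          Set.mem_biUnion hw (⟨huC, hwu⟩ : u ∈ nbhdIn G C w)
        have hadj : G.Adj u v :=
          ((hchain j m (Fin.lt_def.mpr hjm) v hvX humem).2).symm
        have hcast : ((j : ℕ) : ℝ) + 1 ≤ ((m : ℕ) : ℝ) := by exact_mod_cast hjm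
        have hub := φub j (L j v)
        have hlb := φlb m (R m u)
        constructor
        · intro _
          refine ⟨l v, Set.mem_inter ?_ ?_⟩
          · rw [Set.mem_Icc, hlu, hru]
            constructor
            · linarith
            · rw [hlv]; linarith
          · exact Set.mem_Icc.mpr ⟨le_refl _, hlrv⟩
        · intro _; exact hadj
      · -- j = m : use representation m
        have hje : j = m := Fin.ext hjm
        subst hje
        have hune : u ≠ v := fun h => hvnc (h ▸ huC)
        have hadj_iff := (hrepOn j).2 u (Or.inl huC) v (Or.inr hvX) hune
        have hLu : L j u = x0 j := hx0C j u huC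
        have hLRu : L j u ≤ R j u := (hrepOn j).1 u (Or.inl huC)
        have hlru : l u ≤ r u := by
          rw [hlu, hru]
          have := φlb j (R j u)
          linarith
        rw [hadj_iff, icc_inter_nonempty hLRu hLRv, icc_inter_nonempty hlru hlrv]
        constructor
        · rintro ⟨-, h2⟩
          constructor
          · rw [hlu, hrv]
            have := φlb j (R j v)
            linarith
          · rw [hlv, hru]
            exact (φmono j).monotone h2
        · rintro ⟨-, h2⟩
          constructor
          · rw [hLu]
            have := hx0lt j v (Or.inr hvX) hvnc
            linarith
          · rw [hlv, hru] at h2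
            exact ((φmono j).le_iff_le).mp h2
      · -- m < j : not adjacent, intervals disjoint
        have hnadj : ¬ G.Adj u v := by
          intro hadj
          have := hmax j ⟨v, hvX, hadj.symm⟩
          omega
        constructor
        · intro h; exact absurd h hnadj
        · rintro ⟨x, ⟨-, hx1⟩, hx2, -⟩
          exfalso
          rw [hru] at hx1
          have hub := φub m (R m u)
          have hcast : ((m : ℕ) : ℝ) + 1 ≤ ((j : ℕ) : ℝ) := by exact_mod_cast hjm
          linarith
  -- key lemma: both vertices in components
  have keyXX : ∀ (i : Fin k), ∀ u ∈ X i, ∀ (j : Fin k), ∀ v ∈ X j, u ≠ v →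
      (G.Adj u v ↔ (Set.Icc (l u) (r u) ∩ Set.Icc (l v) (r v)).Nonempty) := by
    intro i u hu j v hv hne
    have hlu := lX i u hu; have hru := rX i u hu
    have hlv := lX j v hv; have hrv := rX j v hv
    have hLRu : L i u ≤ R i u := (hrepOn i).1 u (Or.inr hu)
    have hLRv : L j v ≤ R j v := (hrepOn j).1 v (Or.inr hv)
    by_cases hij : i = j
    · subst hij
      have hadj_iff := (hrepOn i).2 u (Or.inr hu) v (Or.inr hv) hne
      have hlru : l u ≤ r u := by rw [hlu, hru]; exact (φmono i).monotone hLRu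
      have hlrv : l v ≤ r v := by rw [hlv, hrv]; exact (φmono i).monotone hLRv
      rw [hadj_iff, icc_inter_nonempty hLRu hLRv, icc_inter_nonempty hlru hlrv,
        hlu, hru, hlv, hrv, (φmono i).le_iff_le, (φmono i).le_iff_le]
    · have hnadj : ¬ G.Adj u v := fun h => hij (hadjeq hu hv h)
      constructor
      · intro h; exact absurd h hnadj
      · rintro ⟨x, ⟨hx0', hx1⟩, hx2, hx3⟩
        exfalso
        rcases Nat.lt_or_ge ((i : ℕ)) ((j : ℕ)) with h | h
        · have h1 := φub i (R i u)
          have h2 := φlb j (L j v)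
          have hcast : ((i : ℕ) : ℝ) + 1 ≤ ((j : ℕ) : ℝ) := by exact_mod_cast h
          rw [← hru] at h1; rw [← hlv] at h2
          linarith
        · have hj : (j : ℕ) < (i : ℕ) :=
            lt_of_le_of_ne h (fun e => hij (Fin.ext e.symm))
          have h1 := φub j (R j v)
          have h2 := φlb i (L i u)
          have hcast : ((j : ℕ) : ℝ) + 1 ≤ ((i : ℕ) : ℝ) := by exact_mod_cast hj
          rw [← hrv] at h1; rw [← hlu] at h2
          linarith
  refine ⟨l, r, ⟨?_, ?_⟩, 0, lC, ?_⟩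
  · rintro u (huC | huU)
    · rw [lC u huC]; exact rCnn u huC
    · obtain ⟨i, hi⟩ := Set.mem_iUnion.mp huU
      rw [lX i u hi, rX i u hi]
      exact (φmono i).monotone ((hrepOn i).1 u (Or.inr hi))
  · rintro u hu v hv hne
    rcases hu with huC | huU
    · rcases hv with hvC | hvU
      · constructor
        · intro _
          exact ⟨0, Set.mem_inter (Set.mem_Icc.mpr ⟨(lC u huC).le, rCnn u huC⟩)
            (Set.mem_Icc.mpr ⟨(lC v hvC).le, rCnn v hvC⟩)⟩
        · intro _; exact hC.1 huC hvC hne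
      · obtain ⟨j, hj⟩ := Set.mem_iUnion.mp hvU
        exact keyCX u huC j v hj
    · obtain ⟨i, hi⟩ := Set.mem_iUnion.mp huU
      rcases hv with hvC | hvU
      · rw [G.adj_comm, Set.inter_comm]
        exact keyCX v hvC i u hi
      · obtain ⟨j, hj⟩ := Set.mem_iUnion.mp hvU
        exact keyXX i u hi j v hj hne
  · rintro u (huC | huU) hnc
    · exact absurd huC hnc
    · obtain ⟨i, hi⟩ := Set.mem_iUnion.mp huU
      have h1 := lXlb i u hi
      have h2 : (0:ℝ) ≤ ((i : ℕ) : ℝ) := Nat.cast_nonneg _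
      linarith
end

section
/- If X and X' are connected components of G − C represented on the same branch of a star representation (both on the same path away from the central clique C), and N_C(X') ⊆ N_C(u) for every u ∈ V(X), and the components are placed with X closer to C, then this placement is consistent: every vertex of N_C(X') can be represented by an interval containing the entire representation of X. Conversely, if N_C(X') ⊆ N_C(u) fails for some u ∈ V(X) (and symmetrically for X'), the two components cannot be placed on the same branch in either order. -/
variable {V : Type}

private lemma comp_subset {G : SimpleGraph V} {C X : Set V} (hX : IsCompOf G C X) : X ⊆ Cᶜ := by
  obtain ⟨c, rfl⟩ := hX
  rintro _ ⟨a, _, rfl⟩; exact a.2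

private lemma comps_eq {G : SimpleGraph V} {C X X' : Set V} (hX : IsCompOf G C X)
    (hX' : IsCompOf G C X') {u u' : V} (hu : u ∈ X) (hu' : u' ∈ X')
    (h : u = u' ∨ G.Adj u u') : X = X' := by
  obtain ⟨c, rfl⟩ := hX
  obtain ⟨c', rfl⟩ := hX'
  obtain ⟨a, ha, rfl⟩ := hu
  obtain ⟨b, hb, rfl⟩ := hu'
  rw [SimpleGraph.ConnectedComponent.mem_supp_iff] at ha hb
  have hcc : c = c' := by
    rcases h with h | h
    · have hab : a = b := Subtype.val_injective h
      rw [← ha, ← hb, hab]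
    · have hadj : (G.induce (Cᶜ : Set V)).Adj a b := by simpa using h
      rw [← ha, ← hb]
      exact SimpleGraph.ConnectedComponent.sound hadj.reachable
  rw [hcc]

private lemma comp_nonempty {G : SimpleGraph V} {C X : Set V} (hX : IsCompOf G C X) :
    ∃ u, u ∈ X := by
  obtain ⟨c, rfl⟩ := hX
  obtain ⟨a, ha⟩ := c.exists_rep
  exact ⟨a.1, a, by rw [SimpleGraph.ConnectedComponent.mem_supp_iff]; exact ha, rfl⟩

private lemma comp_const {G : SimpleGraph V} {C X : Set V} (hX : IsCompOf G C X)
    (P : V → Prop) (hstep : ∀ a ∈ X, ∀ b ∈ X, G.Adj a b → P a → P b) :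
    ∀ a ∈ X, ∀ b ∈ X, P a → P b := by
  obtain ⟨c, rfl⟩ := hX
  have key : ∀ (a b : (Cᶜ : Set V)), (G.induce (Cᶜ : Set V)).Walk a b →
      a ∈ c.supp → b ∈ c.supp → P a.1 → P b.1 := by
    intro a b w
    induction w with
    | nil => exact fun _ _ h => h
    | @cons u x y hadj p ih =>
      intro hu hy hPu
      have hxy : (G.induce (Cᶜ : Set V)).connectedComponentMk x
          = (G.induce (Cᶜ : Set V)).connectedComponentMk y :=
        SimpleGraph.ConnectedComponent.sound p.reachable
      have hx : x ∈ c.supp := by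
        rw [SimpleGraph.ConnectedComponent.mem_supp_iff] at hy ⊢
        rw [hxy, hy]
      have hadj' : G.Adj u.1 x.1 := by simpa using hadj
      exact ih hx hy (hstep u.1 ⟨u, hu, rfl⟩ x.1 ⟨x, hx, rfl⟩ hadj' hPu)
  rintro _ ⟨a, ha, rfl⟩ _ ⟨b, hb, rfl⟩ hPa
  have hr : (G.induce (Cᶜ : Set V)).Reachable a b := by
    rw [SimpleGraph.ConnectedComponent.mem_supp_iff] at ha hb
    exact SimpleGraph.ConnectedComponent.exact (by rw [ha, hb])
  obtain ⟨w⟩ := hr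
  exact key a b w ha hb hPa

private lemma mem_nbhdSet_iff {G : SimpleGraph V} {C X : Set V} {v : V} :
    v ∈ nbhdSet G C X ↔ ∃ w ∈ X, v ∈ C ∧ G.Adj w v := by
  simp [nbhdSet, nbhdIn]; tauto
private lemma icc_inter (a b c d : ℝ) (hab : a ≤ b) (hcd : c ≤ d) :
    (Set.Icc a b ∩ Set.Icc c d).Nonempty ↔ a ≤ d ∧ c ≤ b := by
  rw [Set.Icc_inter_Icc, Set.nonempty_Icc]
  simp only [max_le_iff, le_min_iff]
  exact ⟨fun ⟨⟨_,h2⟩,h3,_⟩ => ⟨h3,h2⟩, fun ⟨h1,h2⟩ => ⟨⟨hab,h2⟩,h1,hcd⟩⟩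

private lemma dicho {G : SimpleGraph V} {C X X' S : Set V} {l r : V → ℝ}
    (hX : IsCompOf G C X) (hX' : IsCompOf G C X') (hne : X ≠ X')
    (hXS : X ⊆ S) (hX'S : X' ⊆ S) (hrep : RepOn G S l r) :
    ∀ u ∈ X, ∀ w ∈ X', r u < l w ∨ r w < l u := by
  intro u hu w hw
  have hne' : u ≠ w := fun h => hne (comps_eq hX hX' hu hw (Or.inl h))
  have hnadj : ¬ G.Adj u w := fun h => hne (comps_eq hX hX' hu hw (Or.inr h))
  have := (hrep.2 u (hXS hu) w (hX'S hw) hne')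
  rw [icc_inter _ _ _ _ (hrep.1 u (hXS hu)) (hrep.1 w (hX'S hw))] at this
  have h2 := this.not.mp hnadj
  rw [not_and_or, not_le, not_le] at h2
  rcases h2 with h | h
  · exact Or.inr h
  · exact Or.inl h

/-- adjacent vertices have intersecting intervals -/

private lemma adj_inter {G : SimpleGraph V} {S : Set V} {l r : V → ℝ}
    (hrep : RepOn G S l r) {a b : V} (ha : a ∈ S) (hb : b ∈ S) (h : G.Adj a b) :
    l a ≤ r b ∧ l b ≤ r a := by
  have := (hrep.2 a ha b hb h.ne).mp h
  rwa [icc_inter _ _ _ _ (hrep.1 a ha) (hrep.1 b hb)] at this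

private lemma side_all {G : SimpleGraph V} {C X X' S : Set V} {l r : V → ℝ}
    (hX : IsCompOf G C X) (hX' : IsCompOf G C X') (hne : X ≠ X')
    (hXS : X ⊆ S) (hX'S : X' ⊆ S) (hrep : RepOn G S l r)
    {u₀ w₀ : V} (hu₀ : u₀ ∈ X) (hw₀ : w₀ ∈ X') (h0 : r u₀ < l w₀) :
    ∀ u ∈ X, ∀ w ∈ X', r u < l w := by
  have d := dicho hX hX' hne hXS hX'S hrep
  have h1 : ∀ u ∈ X, r u < l w₀ := by
    intro u hu
    refine comp_const hX (fun v => r v < l w₀) ?_ u₀ hu₀ u hu h0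
    intro a ha b hb hadj hPa
    by_contra hnb
    rcases d b hb w₀ hw₀ with h | h
    · exact hnb h
    · have hi := adj_inter hrep (hXS ha) (hXS hb) hadj
      have := hrep.1 w₀ (hX'S hw₀)
      linarith [hi.2]
  intro u hu w hw
  refine comp_const hX' (fun v => r u < l v) ?_ w₀ hw₀ w hw (h1 u hu)
  intro a ha b hb hadj hPa
  by_contra hnb
  rcases d u hu b hb with h | h
  · exact hnb h
  · have hi := adj_inter hrep (hX'S ha) (hX'S hb) hadj
    have := hrep.1 u (hXS hu)
    linarith [hi.1]

private lemma no_rep_side {G : SimpleGraph V} {C X X' S : Set V} {l r : V → ℝ}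
    (hX : IsCompOf G C X)
    (hCS : C ⊆ S) (hXS : X ⊆ S) (hX'S : X' ⊆ S)
    (hrep : RepOn G S l r) {x₀ : ℝ} (hl : ∀ v ∈ C, l v = x₀)
    (hlt : ∀ u ∈ S, u ∉ C → x₀ < l u)
    (hnd : ¬ Dominates G C X X')
    (hside : ∀ u ∈ X, ∀ w ∈ X', r u < l w) : False := by
  rw [Dominates] at hnd
  push_neg at hnd
  obtain ⟨u, hu, hsub⟩ := hnd
  rw [Set.not_subset] at hsub
  obtain ⟨v', hv'N, hv'notu⟩ := hsub
  obtain ⟨w, hw, hv'C, hadj⟩ := mem_nbhdSet_iff.mp hv'N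
  have hnadj : ¬ G.Adj u v' := fun h => hv'notu ⟨hv'C, h⟩
  have huC : u ∉ C := (comp_subset hX) hu
  have hx₀lu : x₀ < l u := hlt u (hXS hu) huC
  have huv' : v' ≠ u := fun h => huC (h ▸ hv'C)
  have hlu_ru := hrep.1 u (hXS hu)
  -- intervals of v' and u disjoint
  have hd := (hrep.2 v' (hCS hv'C) u (hXS hu) huv').not.mp (fun h => hnadj h.symm)
  rw [icc_inter _ _ _ _ (hrep.1 v' (hCS hv'C)) hlu_ru, not_and_or, not_le, not_le] at hd
  have hrv'lu : r v' < l u := by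
    rcases hd with h | h
    · linarith [hl v' hv'C]
    · exact h
  have hi := adj_inter hrep (hX'S hw) (hCS hv'C) hadj
  have := hside u hu w hw
  linarith [hi.2]
private lemma part1 {G : SimpleGraph V} {C X X' : Set V} (hC : IsMaxClique G C)
    (hX : IsCompOf G C X) (hX' : IsCompOf G C X') (hne : X ≠ X')
    {l₁ r₁ l₂ r₂ : V → ℝ} {x₁ x₂ : ℝ}
    (hrep1 : RepOn G (C ∪ X) l₁ r₁) (hl1 : ∀ v ∈ C, l₁ v = x₁)
    (hlt1 : ∀ u ∈ C ∪ X, u ∉ C → x₁ < l₁ u)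
    (hrep2 : RepOn G (C ∪ X') l₂ r₂) (hl2 : ∀ v ∈ C, l₂ v = x₂)
    (hlt2 : ∀ u ∈ C ∪ X', u ∉ C → x₂ < l₂ u)
    (hdom : Dominates G C X X') :
    ∃ l r : V → ℝ, RepOn G (C ∪ X ∪ X') l r ∧ LeftmostClique (C ∪ X ∪ X') C l r ∧
      (∀ u ∈ X, ∀ u' ∈ X', r u < l u') ∧
      ∀ v ∈ nbhdSet G C X', ∀ u ∈ X,
        Set.Icc (l u) (r u) ⊆ Set.Icc (l v) (r v) := by
  classical
  -- basic membership facts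
  have hXnC : ∀ u ∈ X, u ∉ C := fun u hu => comp_subset hX hu
  have hX'nC : ∀ u ∈ X', u ∉ C := fun u hu => comp_subset hX' hu
  have hX'nX : ∀ u ∈ X', u ∉ X := fun u hu h => hne (comps_eq hX hX' h hu (Or.inl rfl))
  have hnadj : ∀ u ∈ X, ∀ w ∈ X', ¬ G.Adj u w :=
    fun u hu w hw h => hne (comps_eq hX hX' hu hw (Or.inr h))
  have hNC : ∀ v ∈ nbhdSet G C X', v ∈ C := by
    intro v hv; obtain ⟨_, _, h, _⟩ := mem_nbhdSet_iff.mp hv; exact h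
  -- arctan facts
  have harc2 : ∀ x : ℝ, Real.arctan x < 2 :=
    fun x => lt_of_lt_of_le (Real.arctan_lt_pi_div_two x) (by linarith [Real.pi_le_four])
  have harcn2 : ∀ x : ℝ, -2 < Real.arctan x :=
    fun x => lt_of_le_of_lt (by linarith [Real.pi_le_four]) (Real.neg_pi_div_two_lt_arctan x)
  have hmono : ∀ x y : ℝ, Real.arctan x ≤ Real.arctan y ↔ x ≤ y :=
    fun x y => Real.arctan_strictMono.le_iff_le
  have harcpos : ∀ x : ℝ, 0 < x → 0 < Real.arctan x := fun x h => by
    have := Real.arctan_strictMono h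
    rwa [Real.arctan_zero] at this
  have harcnn : ∀ x : ℝ, 0 ≤ x → 0 ≤ Real.arctan x := fun x h => by
    have := Real.arctan_strictMono.monotone h
    rwa [Real.arctan_zero] at this
  -- interval facts from the two given representations
  have adj1 : ∀ s ∈ C ∪ X, ∀ t ∈ C ∪ X, s ≠ t → (G.Adj s t ↔ (l₁ s ≤ r₁ t ∧ l₁ t ≤ r₁ s)) :=
    fun s hs t ht hst => (hrep1.2 s hs t ht hst).trans
      (icc_inter _ _ _ _ (hrep1.1 s hs) (hrep1.1 t ht))
  have adj2 : ∀ s ∈ C ∪ X', ∀ t ∈ C ∪ X', s ≠ t → (G.Adj s t ↔ (l₂ s ≤ r₂ t ∧ l₂ t ≤ r₂ s)) :=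
    fun s hs t ht hst => (hrep2.2 s hs t ht hst).trans
      (icc_inter _ _ _ _ (hrep2.1 s hs) (hrep2.1 t ht))
  have hlt1' : ∀ u ∈ X, x₁ < l₁ u := fun u hu => hlt1 u (Or.inr hu) (hXnC u hu)
  have hlt2' : ∀ u ∈ X', x₂ < l₂ u := fun u hu => hlt2 u (Or.inr hu) (hX'nC u hu)
  -- the functions
  set L : V → ℝ := fun v =>
    if v ∈ C then 0 else if v ∈ X then Real.arctan (l₁ v - x₁)
    else 4 + Real.arctan (l₂ v - x₂) with hLdef
  set R : V → ℝ := fun v =>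
    if v ∈ C then
      (if v ∈ nbhdSet G C X' then 4 + Real.arctan (r₂ v - x₂) else Real.arctan (r₁ v - x₁))
    else if v ∈ X then Real.arctan (r₁ v - x₁) else 4 + Real.arctan (r₂ v - x₂) with hRdef
  -- value lemmas
  have hLC : ∀ v ∈ C, L v = 0 := by intro v hv; rw [hLdef]; simp [hv]
  have hLX : ∀ v ∈ X, L v = Real.arctan (l₁ v - x₁) := by
    intro v hv; rw [hLdef]; simp [hXnC v hv, hv]
  have hLX' : ∀ v ∈ X', L v = 4 + Real.arctan (l₂ v - x₂) := by
    intro v hv; rw [hLdef]; simp [hX'nC v hv, hX'nX v hv]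
  have hRCN : ∀ v ∈ C, v ∈ nbhdSet G C X' → R v = 4 + Real.arctan (r₂ v - x₂) := by
    intro v hv hvN; rw [hRdef]; simp [hv, hvN]
  have hRCn : ∀ v ∈ C, v ∉ nbhdSet G C X' → R v = Real.arctan (r₁ v - x₁) := by
    intro v hv hvN; rw [hRdef]; simp [hv, hvN]
  have hRX : ∀ v ∈ X, R v = Real.arctan (r₁ v - x₁) := by
    intro v hv; rw [hRdef]; simp [hXnC v hv, hv]
  have hRX' : ∀ v ∈ X', R v = 4 + Real.arctan (r₂ v - x₂) := by
    intro v hv; rw [hRdef]; simp [hX'nC v hv, hX'nX v hv]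
  -- range bounds
  have hLXpos : ∀ v ∈ X, 0 < L v := by
    intro v hv; rw [hLX v hv]; exact harcpos _ (by linarith [hlt1' v hv])
  have hLRX : ∀ v ∈ X, L v ≤ R v := by
    intro v hv; rw [hLX v hv, hRX v hv, hmono]
    linarith [hrep1.1 v (Or.inr hv)]
  have hRXpos : ∀ v ∈ X, 0 < R v := fun v hv => lt_of_lt_of_le (hLXpos v hv) (hLRX v hv)
  have hRX2 : ∀ v ∈ X, R v < 2 := by intro v hv; rw [hRX v hv]; exact harc2 _
  have hLX'2 : ∀ v ∈ X', 2 < L v := by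
    intro v hv; rw [hLX' v hv]; linarith [harcn2 (l₂ v - x₂)]
  have hLRX' : ∀ v ∈ X', L v ≤ R v := by
    intro v hv; rw [hLX' v hv, hRX' v hv]
    have := (hmono (l₂ v - x₂) (r₂ v - x₂)).mpr (by linarith [hrep2.1 v (Or.inr hv)])
    linarith
  have hRC0 : ∀ v ∈ C, 0 ≤ R v := by
    intro v hv
    by_cases hvN : v ∈ nbhdSet G C X'
    · rw [hRCN v hv hvN]; linarith [harcn2 (r₂ v - x₂)]
    · rw [hRCn v hv hvN]
      have : x₁ ≤ r₁ v - x₁ + x₁ := by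
        have h1 := hrep1.1 v (Or.inl hv); have h2 := hl1 v hv; linarith
      exact harcnn _ (by linarith)
  have hRCN2 : ∀ v ∈ C, v ∈ nbhdSet G C X' → 2 < R v := by
    intro v hv hvN; rw [hRCN v hv hvN]; linarith [harcn2 (r₂ v - x₂)]
  have hbnd : ∀ w ∈ C ∪ X ∪ X', L w ≤ R w := by
    rintro w ((hw | hw) | hw)
    · rw [hLC w hw]; exact hRC0 w hw
    · exact hLRX w hw
    · exact hLRX' w hw
  -- core adjacency characterisations
  have coreCC : ∀ u ∈ C, ∀ v ∈ C, u ≠ v → (G.Adj u v ↔ (L u ≤ R v ∧ L v ≤ R u)) := by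
    intro u hu v hv huv
    refine iff_of_true (hC.1 hu hv huv) ⟨?_, ?_⟩
    · rw [hLC u hu]; exact hRC0 v hv
    · rw [hLC v hv]; exact hRC0 u hu
  have coreCX : ∀ v ∈ C, ∀ u ∈ X, (G.Adj v u ↔ (L v ≤ R u ∧ L u ≤ R v)) := by
    intro v hv u hu
    have hvu : v ≠ u := fun h => hXnC u hu (h ▸ hv)
    by_cases hvN : v ∈ nbhdSet G C X'
    · refine iff_of_true ?_ ⟨?_, ?_⟩
      · exact (hdom u hu hvN).2.symm
      · rw [hLC v hv]; exact le_of_lt (hRXpos u hu)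
      · calc L u ≤ R u := hLRX u hu
          _ ≤ R v := by linarith [hRX2 u hu, hRCN2 v hv hvN]
    · rw [hLC v hv, hRCn v hv hvN, hLX u hu, hRX u hu,
        adj1 v (Or.inl hv) u (Or.inr hu) hvu]
      have h1 : l₁ v ≤ r₁ u := by
        have := hrep1.1 u (Or.inr hu); have := hlt1' u hu; have := hl1 v hv; linarith
      have h2 : (0:ℝ) ≤ Real.arctan (r₁ u - x₁) := by
        have := hrep1.1 u (Or.inr hu); have := hlt1' u hu
        exact harcnn _ (by linarith)
      constructor
      · rintro ⟨-, h⟩; exact ⟨h2, (hmono _ _).mpr (by linarith)⟩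
      · rintro ⟨-, h⟩; exact ⟨h1, by have := (hmono _ _).mp h; linarith⟩
  have coreCX' : ∀ v ∈ C, ∀ u ∈ X', (G.Adj v u ↔ (L v ≤ R u ∧ L u ≤ R v)) := by
    intro v hv u hu
    have hvu : v ≠ u := fun h => hX'nC u hu (h ▸ hv)
    by_cases hvN : v ∈ nbhdSet G C X'
    · rw [hLC v hv, hRCN v hv hvN, hLX' u hu, hRX' u hu,
        adj2 v (Or.inl hv) u (Or.inr hu) hvu]
      have h1 : l₂ v ≤ r₂ u := by
        have := hrep2.1 u (Or.inr hu); have := hlt2' u hu; have := hl2 v hv; linarith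
      have h2 : (0:ℝ) ≤ 4 + Real.arctan (r₂ u - x₂) := by linarith [harcn2 (r₂ u - x₂)]
      constructor
      · rintro ⟨-, h⟩
        refine ⟨h2, ?_⟩
        have := (hmono (l₂ u - x₂) (r₂ v - x₂)).mpr (by linarith)
        linarith
      · rintro ⟨-, h⟩
        have := (hmono (l₂ u - x₂) (r₂ v - x₂)).mp (by linarith)
        exact ⟨h1, by linarith⟩
    · refine iff_of_false ?_ ?_
      · intro h; exact hvN (mem_nbhdSet_iff.mpr ⟨u, hu, hv, h.symm⟩)
      · rintro ⟨-, h⟩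
        rw [hLX' u hu, hRCn v hv hvN] at h
        linarith [harcn2 (l₂ u - x₂), harc2 (r₁ v - x₁)]
  have coreXX : ∀ u ∈ X, ∀ v ∈ X, u ≠ v → (G.Adj u v ↔ (L u ≤ R v ∧ L v ≤ R u)) := by
    intro u hu v hv huv
    rw [hLX u hu, hRX u hu, hLX v hv, hRX v hv, adj1 u (Or.inr hu) v (Or.inr hv) huv,
      hmono, hmono]
    constructor
    · rintro ⟨h1, h2⟩; exact ⟨by linarith, by linarith⟩
    · rintro ⟨h1, h2⟩; exact ⟨by linarith, by linarith⟩
  have coreXX' : ∀ u ∈ X, ∀ v ∈ X', (G.Adj u v ↔ (L u ≤ R v ∧ L v ≤ R u)) := by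
    intro u hu v hv
    refine iff_of_false (hnadj u hu v hv) ?_
    rintro ⟨-, h⟩
    linarith [hLX'2 v hv, hRX2 u hu]
  have coreX'X' : ∀ u ∈ X', ∀ v ∈ X', u ≠ v → (G.Adj u v ↔ (L u ≤ R v ∧ L v ≤ R u)) := by
    intro u hu v hv huv
    rw [hLX' u hu, hRX' u hu, hLX' v hv, hRX' v hv, adj2 u (Or.inr hu) v (Or.inr hv) huv]
    constructor
    · rintro ⟨h1, h2⟩
      have := (hmono (l₂ u - x₂) (r₂ v - x₂)).mpr (by linarith)
      have := (hmono (l₂ v - x₂) (r₂ u - x₂)).mpr (by linarith)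
      exact ⟨by linarith, by linarith⟩
    · rintro ⟨h1, h2⟩
      have := (hmono (l₂ u - x₂) (r₂ v - x₂)).mp (by linarith)
      have := (hmono (l₂ v - x₂) (r₂ u - x₂)).mp (by linarith)
      exact ⟨by linarith, by linarith⟩
  refine ⟨L, R, ⟨hbnd, ?_⟩, ⟨0, hLC, ?_⟩, ?_, ?_⟩
  · -- adjacency
    intro u hu v hv huv
    rw [icc_inter _ _ _ _ (hbnd u hu) (hbnd v hv)]
    rcases hu with (hu | hu) | hu <;> rcases hv with (hv | hv) | hv
    · exact coreCC u hu v hv huv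
    · exact coreCX u hu v hv
    · exact coreCX' u hu v hv
    · exact (G.adj_comm u v).trans ((coreCX v hv u hu).trans and_comm)
    · exact coreXX u hu v hv huv
    · exact coreXX' u hu v hv
    · exact (G.adj_comm u v).trans ((coreCX' v hv u hu).trans and_comm)
    · exact (G.adj_comm u v).trans ((coreXX' v hv u hu).trans and_comm)
    · exact coreX'X' u hu v hv huv
  · -- leftmost
    rintro u ((hu | hu) | hu) hunC
    · exact absurd hu hunC
    · exact hLXpos u hu
    · linarith [hLX'2 u hu]
  · -- order
    intro u hu u' hu'
    calc R u < 2 := hRX2 u hu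
      _ < L u' := hLX'2 u' hu'
  · -- containment
    intro v hv u hu
    have hvC := hNC v hv
    apply Set.Icc_subset_Icc
    · rw [hLC v hvC]; exact le_of_lt (hLXpos u hu)
    · have h1 := hRX2 u hu
      have h2 := hRCN2 v hvC hv
      linarith

/-- Placement of two components on the same branch of a star representation.
If `N_C(X') ⊆ N_C(u)` for every `u ∈ X` (i.e. `X ▷ X'`) then placing `X` closer to `C`
is consistent: there is an interval representation of `G[C ∪ X ∪ X']` with `C` leftmost,
`X` entirely before `X'`, in which every vertex of `N_C(X')` is represented by an interval
containing the entire representation of `X`.  Conversely, if neither `X ▷ X'` nor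
`X' ▷ X`, the two components cannot be placed on the same branch in either order:
no interval representation of `G[C ∪ X ∪ X']` with `C` leftmost exists. -/
theorem same_branch_placement (G : SimpleGraph V) (C : Set V) (hC : IsMaxClique G C)
    (X X' : Set V) (hX : IsCompOf G C X) (hX' : IsCompOf G C X') (hXX' : X ≠ X')
    (h1 : ∃ l r : V → ℝ, RepOn G (C ∪ X) l r ∧ LeftmostClique (C ∪ X) C l r)
    (h2 : ∃ l r : V → ℝ, RepOn G (C ∪ X') l r ∧ LeftmostClique (C ∪ X') C l r) :
    (Dominates G C X X' →
      ∃ l r : V → ℝ, RepOn G (C ∪ X ∪ X') l r ∧ LeftmostClique (C ∪ X ∪ X') C l r ∧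
        (∀ u ∈ X, ∀ u' ∈ X', r u < l u') ∧
        ∀ v ∈ nbhdSet G C X', ∀ u ∈ X,
          Set.Icc (l u) (r u) ⊆ Set.Icc (l v) (r v)) ∧
    ((¬ Dominates G C X X' ∧ ¬ Dominates G C X' X) →
      ¬ ∃ l r : V → ℝ, RepOn G (C ∪ X ∪ X') l r ∧
          LeftmostClique (C ∪ X ∪ X') C l r) := by
  obtain ⟨l₁, r₁, hrep1, x₁, hl1, hlt1⟩ := h1
  obtain ⟨l₂, r₂, hrep2, x₂, hl2, hlt2⟩ := h2
  constructor
  · intro hdom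
    exact part1 hC hX hX' hXX' hrep1 hl1 hlt1 hrep2 hl2 hlt2 hdom
  · rintro ⟨hnd1, hnd2⟩ ⟨l, r, hrep, x₀, hl, hlt⟩
    have hCS : C ⊆ C ∪ X ∪ X' := fun v hv => Or.inl (Or.inl hv)
    have hXS : X ⊆ C ∪ X ∪ X' := fun v hv => Or.inl (Or.inr hv)
    have hX'S : X' ⊆ C ∪ X ∪ X' := fun v hv => Or.inr hv
    obtain ⟨u₀, hu₀⟩ := comp_nonempty hX
    obtain ⟨w₀, hw₀⟩ := comp_nonempty hX'
    rcases dicho hX hX' hXX' hXS hX'S hrep u₀ hu₀ w₀ hw₀ with h | h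
    · exact no_rep_side hX hCS hXS hX'S hrep hl hlt hnd1
        (side_all hX hX' hXX' hXS hX'S hrep hu₀ hw₀ h)
    · exact no_rep_side hX' hCS hX'S hXS hrep hl hlt hnd2
        (side_all hX' hX (Ne.symm hXX') hX'S hXS hrep hw₀ hu₀ h)
end

section
/- If f : ℬ → 𝒞 assigns maximal cliques to branching points of a tree T such that a T-representation of a graph G exists with b ∈ ⋂_{v∈f(b)} V(T'_v) for all b, and f(b) = f(b') for two branching points b, b', then f(b'') = f(b) for every branching point b'' on the path from b to b' in T; consequently, for each clique C ∈ f(ℬ), the preimage f⁻¹(C) induces a subtree of T. -/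
variable {V : Type}

/-- A subtree of a tree `T`: a nonempty set of vertices inducing a connected subgraph. -/
def IsSubtree {W : Type} (T : SimpleGraph W) (S : Set W) : Prop :=
  S.Nonempty ∧ (T.induce S).Connected

/-- `R` is a representation of `G` by subtrees of the tree `T`: each vertex gets a subtree,
and distinct vertices are adjacent iff their subtrees intersect. -/
def TreeRep {V W : Type} (G : SimpleGraph V) (T : SimpleGraph W) (R : V → Set W) : Prop :=
  (∀ v, IsSubtree T (R v)) ∧ ∀ u v, u ≠ v → (G.Adj u v ↔ (R u ∩ R v).Nonempty)

/-- `T'` is a subdivision of `T` witnessed by the embedding `f` of branch vertices and the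
family `P` of paths replacing the edges: the paths are internally disjoint from each other
and from the branch vertices, and they cover all of `T'`. -/
def IsSubdivisionPaths {W W' : Type} (T : SimpleGraph W) (T' : SimpleGraph W')
    (f : W → W') (P : ∀ u v, T.Adj u v → T'.Walk (f u) (f v)) : Prop :=
  Function.Injective f ∧
  (∀ u v (h : T.Adj u v), (P u v h).IsPath) ∧
  (∀ u v (h : T.Adj u v) (w : W), f w ∈ (P u v h).support → w = u ∨ w = v) ∧
  (∀ u v (h : T.Adj u v) u' v' (h' : T.Adj u' v'), s(u, v) ≠ s(u', v') →
    ∀ x : W', x ∈ (P u v h).support → x ∈ (P u' v' h').support → x ∈ Set.range f) ∧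
  (∀ x : W', x ∈ Set.range f ∨ ∃ (u v : W) (h : T.Adj u v), x ∈ (P u v h).support) ∧
  (∀ e ∈ T'.edgeSet, ∃ (u v : W) (h : T.Adj u v), e ∈ (P u v h).edges)

def IsSubdivisionWith {W W' : Type} (T : SimpleGraph W) (T' : SimpleGraph W')
    (f : W → W') : Prop :=
  ∃ P : (∀ u v, T.Adj u v → T'.Walk (f u) (f v)), IsSubdivisionPaths T T' f P

def IsSubdivision {W W' : Type} (T : SimpleGraph W) (T' : SimpleGraph W') : Prop :=
  ∃ f : W → W', IsSubdivisionWith T T' f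

/-- A graph is chordal if every cycle of length at least 4 has a chord. -/
def IsChordal {V : Type} (G : SimpleGraph V) : Prop :=
  ∀ (v : V) (c : G.Walk v v), c.IsCycle → 4 ≤ c.length →
    ∃ u w : V, u ∈ c.support ∧ w ∈ c.support ∧ G.Adj u w ∧ s(u, w) ∉ c.edges

/-!
A branching point `c` strictly inside the `T`-path from `b` to `b'` separates `b` from `b'` in
`T`, and `f c` then separates `f b` from `f b'` in the subdivision `T'`: the images of one side
of `T - c`, together with the interior vertices of the subdivision paths leaving that side, form a
set closed under `T'`-adjacency away from `f c`. Hence every subtree `R v` with `v ∈ cl b = cl b'`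
contains `f c`, so all vertices of `cl b ∪ cl c` are represented at the common point `f c`. They
form a clique, and maximality of both cliques gives `cl c = cl b`.
-/

open SimpleGraph

namespace SimpleGraph

variable {U : Type} {G : SimpleGraph U}

theorem Walk.mem_support_of_forall_adj_mem {S : Set U} {c x y : U}
    (hS : ∀ u ∈ S, ∀ w, G.Adj u w → w ≠ c → w ∈ S) (hx : x ∈ S) (hy : y ∉ S)
    (q : G.Walk x y) : c ∈ q.support := by
  obtain ⟨d, hd, hfst, hsnd⟩ := q.exists_boundary_dart S hx hy
  by_contra hc
  have hne : d.snd ≠ c := fun h => hc (h ▸ q.dart_snd_mem_support_of_mem_darts hd)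
  exact hsnd (hS _ hfst _ d.adj hne)

theorem IsAcyclic.mem_support_of_mem_support_path [DecidableEq U] (hG : G.IsAcyclic)
    {u v c : U} {p : G.Walk u v} (hp : p.IsPath) (hc : c ∈ p.support) (r : G.Walk u v) :
    c ∈ r.support := by
  have hpr : (⟨p, hp⟩ : G.Path u v) = r.toPath := (hG.subsingleton_path u v).elim _ _
  exact r.support_toPath_subset_support (congrArg (fun q : G.Path u v => q.1.support) hpr ▸ hc)

end SimpleGraph

section Subdivision

variable {W W' : Type} {T : SimpleGraph W} {T' : SimpleGraph W'} {f : W → W'}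
  {P : ∀ u v, T.Adj u v → T'.Walk (f u) (f v)}

def subdivisionSide (f : W → W') (P : ∀ u v, T.Adj u v → T'.Walk (f u) (f v)) (A : Set W) :
    Set W' :=
  f '' A ∪ {x | x ∉ Set.range f ∧ ∃ u v, ∃ h : T.Adj u v, x ∈ (P u v h).support ∧ (u ∈ A ∨ v ∈ A)}

theorem IsSubdivisionPaths.adj_mem_subdivisionSide (hP : IsSubdivisionPaths T T' f P)
    {A : Set W} {c : W} (hA : ∀ w ∈ A, ∀ w', T.Adj w w' → w' ≠ c → w' ∈ A)
    {x y : W'} (hx : x ∈ subdivisionSide f P A) (hxy : T'.Adj x y) (hy : y ≠ f c) :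
    y ∈ subdivisionSide f P A := by
  obtain ⟨-, -, hends, hdisj, -, hedge⟩ := hP
  obtain ⟨u, v, huv, he⟩ := hedge s(x, y) hxy
  have hxP := (P u v huv).fst_mem_support_of_mem_edges he
  have hyP := (P u v huv).snd_mem_support_of_mem_edges he
  have huvA : u ∈ A ∨ v ∈ A := by
    rcases hx with ⟨w, hw, rfl⟩ | ⟨hxf, u', v', huv', hxP', hA'⟩
    · rcases hends u v huv w hxP with rfl | rfl
      exacts [Or.inl hw, Or.inr hw]
    · -- an interior vertex lies on only one subdivision path
      by_contra hne
      have hsame : s(u, v) = s(u', v') := by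
        by_contra hs
        exact hxf (hdisj u v huv u' v' huv' hs x hxP hxP')
      rcases Sym2.eq_iff.mp hsame with ⟨rfl, rfl⟩ | ⟨rfl, rfl⟩
      exacts [hne hA', hne hA'.symm]
  by_cases hyf : y ∈ Set.range f
  · obtain ⟨w, rfl⟩ := hyf
    have hwc : w ≠ c := fun h => hy (h ▸ rfl)
    refine Or.inl ⟨w, ?_, rfl⟩
    rcases hends u v huv w hyP with rfl | rfl
    · exact huvA.elim id fun hv => hA v hv w huv.symm hwc
    · exact huvA.elim (fun hu => hA u hu w huv hwc) id
  · exact Or.inr ⟨hyf, u, v, huv, hyP, huvA⟩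

theorem IsSubdivisionPaths.apply_mem_support (hP : IsSubdivisionPaths T T' f P)
    {A : Set W} {b b' c : W} (hA : ∀ w ∈ A, ∀ w', T.Adj w w' → w' ≠ c → w' ∈ A)
    (hb : b ∈ A) (hb' : b' ∉ A) (q : T'.Walk (f b) (f b')) : f c ∈ q.support := by
  refine q.mem_support_of_forall_adj_mem (fun x hx y hxy hy =>
    hP.adj_mem_subdivisionSide hA hx hxy hy) (Or.inl ⟨b, hb, rfl⟩) ?_
  rintro (⟨w, hw, hwb⟩ | ⟨hf, -⟩)
  · exact hb' (hP.1 hwb ▸ hw)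
  · exact hf ⟨b', rfl⟩

theorem IsSubdivisionWith.apply_mem_of_isSubtree (hsub : IsSubdivisionWith T T' f)
    (hT : T.IsAcyclic) {b b' c : W} {p : T.Walk b b'} (hp : p.IsPath) (hc : c ∈ p.support)
    {S : Set W'} (hS : IsSubtree T' S) (hb : f b ∈ S) (hb' : f b' ∈ S) : f c ∈ S := by
  classical
  obtain ⟨P, hP⟩ := hsub
  rcases eq_or_ne c b with rfl | hcb
  · exact hb
  let A : Set W := {w | ∃ r : T.Walk b w, c ∉ r.support}
  have hA : ∀ w ∈ A, ∀ w', T.Adj w w' → w' ≠ c → w' ∈ A := by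
    rintro w ⟨r, hr⟩ w' hww' hw'
    refine ⟨r.concat hww', ?_⟩
    simp only [Walk.support_concat, List.mem_append, List.mem_singleton, not_or]
    exact ⟨hr, hw'.symm⟩
  have hbA : b ∈ A := ⟨Walk.nil, by simpa using hcb⟩
  have hb'A : b' ∉ A := fun ⟨r, hr⟩ => hr (hT.mem_support_of_mem_support_path hp hc r)
  obtain ⟨q⟩ := hS.2.preconnected ⟨f b, hb⟩ ⟨f b', hb'⟩
  have hcq := hP.apply_mem_support hA hbA hb'A (q.map (Embedding.induce S).toHom)
  obtain ⟨⟨x, hxS⟩, -, rfl⟩ := List.mem_map.mp ((Walk.support_map _ q) ▸ hcq)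
  exact hxS

end Subdivision

theorem TreeRep.isClique_of_forall_mem {V W : Type} {G : SimpleGraph V} {T : SimpleGraph W}
    {R : V → Set W} (hrep : TreeRep G T R) {S : Set V} {x : W} (hx : ∀ v ∈ S, x ∈ R v) :
    G.IsClique S :=
  fun u hu v hv huv => (hrep.2 u v huv).mpr ⟨x, hx u hu, hx v hv⟩

theorem IsMaxClique.eq_of_isClique_union {G : SimpleGraph V} {C D : Set V}
    (hC : IsMaxClique G C) (hD : IsMaxClique G D) (hCD : G.IsClique (C ∪ D)) : C = D :=
  (hC.2 _ hCD Set.subset_union_left).trans (hD.2 _ hCD Set.subset_union_right).symm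

theorem clique_assignment_subtree_general {W W' : Type}
    (T : SimpleGraph W) (hT : T.IsTree)
    (T' : SimpleGraph W') (f : W → W') (hsub : IsSubdivisionWith T T' f)
    (G : SimpleGraph V) (R : V → Set W') (hrep : TreeRep G T' R)
    (cl : W → Set V)
    (hcl : ∀ b : W, 3 ≤ (T.neighborSet b).ncard →
      IsMaxClique G (cl b) ∧ ∀ v ∈ cl b, f b ∈ R v) :
    (∀ b b' : W, 3 ≤ (T.neighborSet b).ncard → 3 ≤ (T.neighborSet b').ncard →
      cl b = cl b' → ∀ (p : T.Walk b b'), p.IsPath →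
        ∀ b'' ∈ p.support, 3 ≤ (T.neighborSet b'').ncard → cl b'' = cl b) ∧
    (∀ C₀ : Set V, ∀ b b' : W, 3 ≤ (T.neighborSet b).ncard →
      3 ≤ (T.neighborSet b').ncard → cl b = C₀ → cl b' = C₀ →
      ∀ (p : T.Walk b b'), p.IsPath →
        ∀ b'' ∈ p.support, 3 ≤ (T.neighborSet b'').ncard → cl b'' = C₀) := by
  have hpath : ∀ b b' : W, 3 ≤ (T.neighborSet b).ncard → 3 ≤ (T.neighborSet b').ncard →
      cl b = cl b' → ∀ (p : T.Walk b b'), p.IsPath →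
        ∀ b'' ∈ p.support, 3 ≤ (T.neighborSet b'').ncard → cl b'' = cl b := by
    intro b b' hb hb' hbb' p hp c hc hcdeg
    have hcommon : ∀ v ∈ cl c ∪ cl b, f c ∈ R v := by
      rintro v (hv | hv)
      · exact (hcl c hcdeg).2 v hv
      · exact hsub.apply_mem_of_isSubtree hT.isAcyclic hp hc (hrep.1 v) ((hcl b hb).2 v hv)
          ((hcl b' hb').2 v (hbb' ▸ hv))
    exact (hcl c hcdeg).1.eq_of_isClique_union (hcl b hb).1 (hrep.isClique_of_forall_mem hcommon)
  refine ⟨hpath, fun C₀ b b' hb hb' hbC hb'C p hp c hc hcdeg => ?_⟩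
  rw [hpath b b' hb hb' (hbC.trans hb'C.symm) p hp c hc hcdeg, hbC]

/-- If a valid clique assignment `cl` on branching points gives equal cliques on `b` and
`b'`, then every branching point on the path from `b` to `b'` receives the same clique;
consequently every preimage `cl⁻¹(C)` is closed under taking branching points on paths,
i.e. induces a subtree of `T`. -/
theorem clique_assignment_subtree {W W' : Type} [Fintype V] [Fintype W] [Fintype W']
    (T : SimpleGraph W) (hT : T.IsTree)
    (T' : SimpleGraph W') (f : W → W') (hsub : IsSubdivisionWith T T' f)
    (G : SimpleGraph V) (R : V → Set W') (hrep : TreeRep G T' R)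
    (cl : W → Set V)
    (hcl : ∀ b : W, 3 ≤ (T.neighborSet b).ncard →
      IsMaxClique G (cl b) ∧ ∀ v ∈ cl b, f b ∈ R v) :
    (∀ b b' : W, 3 ≤ (T.neighborSet b).ncard → 3 ≤ (T.neighborSet b').ncard →
      cl b = cl b' → ∀ (p : T.Walk b b'), p.IsPath →
        ∀ b'' ∈ p.support, 3 ≤ (T.neighborSet b'').ncard → cl b'' = cl b) ∧
    (∀ C₀ : Set V, ∀ b b' : W, 3 ≤ (T.neighborSet b).ncard →
      3 ≤ (T.neighborSet b').ncard → cl b = C₀ → cl b' = C₀ →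
      ∀ (p : T.Walk b b'), p.IsPath →
        ∀ b'' ∈ p.support, 3 ≤ (T.neighborSet b'').ncard → cl b'' = C₀) :=
  clique_assignment_subtree_general T hT T' f hsub G R hrep cl hcl
end

section
/- Interval graphs are exactly the 1-thin graphs: a graph G is an interval graph if and only if there exists an ordering v_1, …, v_n of V(G) such that for every triple p < q < r with v_r v_p ∈ E(G), also v_r v_q ∈ E(G). -/
/-!
Ordering the vertices of an interval graph by right endpoint makes it 1-thin: if the interval
of `v_r` meets that of `v_p`, it contains a point `≤ r(v_p) ≤ r(v_q) ≤ r(v_r)`, hence the right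
endpoint `r(v_q)`. Conversely, given a 1-thin ordering, assign to `v` the interval from its
leftmost neighbour to `v` itself; thinness says the neighbours of `v` preceding it form a final
segment of the vertices before `v`, so two intervals meet exactly when the vertices are adjacent.
-/

variable {V : Type}

/-- `G` is an interval graph: distinct vertices are adjacent iff their closed real
intervals intersect. -/
def IsIntervalGraph (G : SimpleGraph V) : Prop :=
  ∃ l r : V → ℝ, (∀ v, l v ≤ r v) ∧
    ∀ u v, u ≠ v →
      (G.Adj u v ↔ (Set.Icc (l u) (r u) ∩ Set.Icc (l v) (r v)).Nonempty)

theorem exists_isStrictTotalOrder_monotone {α : Type*} [LinearOrder α] (f : V → α) :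
    ∃ lt : V → V → Prop, IsStrictTotalOrder V lt ∧ ∀ u v, lt u v → f u ≤ f v := by
  let key : V → α ×ₗ Cardinal := fun v => toLex (f v, embeddingToCardinal v)
  have key_injective : key.Injective := fun u v h =>
    embeddingToCardinal.injective (congrArg (fun x => (ofLex x).2) h)
  let := LinearOrder.lift' key key_injective
  exact ⟨(· < ·), inferInstance, fun u v h =>
    Prod.Lex.monotone_fst _ _ (le_of_lt (α := α ×ₗ Cardinal) h)⟩

namespace SimpleGraph

variable {G : SimpleGraph V}

theorem adj_of_right_le_of_right_le {l r : V → ℝ} (hlr : ∀ v, l v ≤ r v)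
    (hG : ∀ u v, u ≠ v → (G.Adj u v ↔ (Set.Icc (l u) (r u) ∩ Set.Icc (l v) (r v)).Nonempty))
    {p q s : V} (hpq : r p ≤ r q) (hqs : r q ≤ r s) (hq : q ≠ s) (hsp : G.Adj s p) :
    G.Adj s q := by
  obtain ⟨x, ⟨hsx, -⟩, -, hxp⟩ := (hG s p hsp.ne).mp hsp
  exact (hG s q hq.symm).mpr ⟨r q, ⟨hsx.trans (hxp.trans hpq), hqs⟩, hlr q, le_rfl⟩

section LinearOrder

variable [LinearOrder V]

theorem isIntervalGraph_of_adj_iff_le (ρ : V ↪o ℝ) (m : V → V) (hm : ∀ v, m v ≤ v)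
    (hadj : ∀ u v, u < v → (G.Adj u v ↔ m v ≤ u)) : IsIntervalGraph G := by
  refine ⟨fun v => ρ (m v), ρ, fun v => ρ.monotone (hm v), ?_⟩
  have key : ∀ u v, u < v →
      (G.Adj u v ↔ (Set.Icc (ρ (m u)) (ρ u) ∩ Set.Icc (ρ (m v)) (ρ v)).Nonempty) := by
    intro u v huv
    rw [hadj u v huv, Set.Icc_inter_Icc, Set.nonempty_Icc, min_eq_left (ρ.monotone huv.le),
      max_le_iff, ρ.le_iff_le, ρ.le_iff_le, and_iff_right (hm u)]
  intro u v huv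
  rcases huv.lt_or_gt with h | h
  · exact key u v h
  · rw [G.adj_comm, Set.inter_comm]; exact key v u h

variable [WellFoundedLT V]

noncomputable def leftmostNeighbor (G : SimpleGraph V) (v : V) : V :=
  wellFounded_lt.min {u | u = v ∨ G.Adj u v} ⟨v, Or.inl rfl⟩

theorem leftmostNeighbor_le (v : V) : G.leftmostNeighbor v ≤ v :=
  wellFounded_lt.min_le (s := {u | u = v ∨ G.Adj u v}) (Or.inl rfl)

theorem adj_iff_leftmostNeighbor_le (hthin : ∀ p q r : V, p < q → q < r → G.Adj r p → G.Adj r q)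
    {u v : V} (huv : u < v) : G.Adj u v ↔ G.leftmostNeighbor v ≤ u := by
  refine ⟨fun h => wellFounded_lt.min_le (s := {u | u = v ∨ G.Adj u v}) (Or.inr h), fun h => ?_⟩
  have hmem : G.leftmostNeighbor v = v ∨ G.Adj (G.leftmostNeighbor v) v :=
    wellFounded_lt.min_mem {u | u = v ∨ G.Adj u v} ⟨v, Or.inl rfl⟩
  have hne : G.leftmostNeighbor v ≠ v := (h.trans_lt huv).ne
  rcases h.lt_or_eq with h | h
  · exact (hthin _ u v h huv (hmem.resolve_left hne).symm).symm
  · exact h ▸ hmem.resolve_left hne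

theorem isIntervalGraph_of_thin [Countable V]
    (hthin : ∀ p q r : V, p < q → q < r → G.Adj r p → G.Adj r q) : IsIntervalGraph G := by
  obtain ⟨ρ⟩ : Nonempty (V ↪o ℝ) := Order.embedding_from_countable_to_dense _ _
  exact isIntervalGraph_of_adj_iff_le ρ G.leftmostNeighbor leftmostNeighbor_le
    fun u v => adj_iff_leftmostNeighbor_le hthin

end LinearOrder

end SimpleGraph

/-- Interval graphs are exactly the `1`-thin graphs: `G` is an interval graph iff there is
an ordering of its vertices such that for `p < q < r`, if `v_r v_p` is an edge then so is
`v_r v_q`. -/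
theorem interval_iff_oneThin [Fintype V] (G : SimpleGraph V) :
    IsIntervalGraph G ↔
      ∃ lt : V → V → Prop, IsStrictTotalOrder V lt ∧
        ∀ p q r : V, lt p q → lt q r → G.Adj r p → G.Adj r q := by
  classical
  constructor
  · rintro ⟨l, r, hlr, hG⟩
    obtain ⟨lt, hlt, hmono⟩ := exists_isStrictTotalOrder_monotone r
    exact ⟨lt, hlt, fun p q s hpq hqs =>
      G.adj_of_right_le_of_right_le hlr hG (hmono p q hpq) (hmono q s hqs) (ne_of_irrefl hqs)⟩
  · rintro ⟨lt, hlt, hthin⟩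
    let := linearOrderOfSTO lt
    exact SimpleGraph.isIntervalGraph_of_thin hthin
end

section
/- Let G be a co-comparability graph. Then the thinness of G is at most χ(G): given any proper coloring of G with color classes V^1, …, V^k and any comparability ordering v_1, …, v_n of the complement of G, the ordering and partition are consistent, i.e., for every triple p < q < r with v_p, v_q in the same color class and v_r v_p ∈ E(G), we have v_r v_q ∈ E(G). -/
variable {V : Type}

/-- `G` is `k`-thin: there are an ordering and a partition into `k` classes that are
consistent. -/
def KThin (G : SimpleGraph V) (k : ℕ) : Prop :=
  ∃ (lt : V → V → Prop) (cls : V → Fin k), IsStrictTotalOrder V lt ∧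
    ∀ p q r : V, lt p q → lt q r → cls p = cls q → G.Adj r p → G.Adj r q

/-- For a co-comparability graph `G`, any proper coloring (color classes `V¹,…,Vᵏ`) and
any comparability ordering of the complement are consistent; hence the thinness of `G`
is at most `χ(G)`. -/
theorem cocomparability_thinness [Fintype V] (G : SimpleGraph V) (k : ℕ)
    (lt : V → V → Prop) (hlt : IsStrictTotalOrder V lt)
    (hcompord : ∀ p q r : V, lt p q → lt q r → Gᶜ.Adj p q → Gᶜ.Adj q r → Gᶜ.Adj p r)
    (col : V → Fin k) (hcol : ∀ u v, G.Adj u v → col u ≠ col v) :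
    (∀ p q r : V, lt p q → lt q r → col p = col q → G.Adj r p → G.Adj r q) ∧
      KThin G k := by
  have key : ∀ p q r : V, lt p q → lt q r → col p = col q → G.Adj r p → G.Adj r q := by
    intro p q r hpq hqr hc hrp
    by_contra hnrq
    have hpq' : p ≠ q := fun h => hlt.irrefl q (h ▸ hpq)
    have hqr' : q ≠ r := fun h => hlt.irrefl q (h ▸ hqr)
    have h1 : Gᶜ.Adj p q := ⟨hpq', fun h => hcol p q h hc⟩
    have h2 : Gᶜ.Adj q r := ⟨hqr', fun h => hnrq h.symm⟩
    have h3 : Gᶜ.Adj p r := hcompord p q r hpq hqr h1 h2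
    exact h3.2 hrp.symm
  exact ⟨key, lt, col, hlt, key⟩
end

section
/- In the layered digraph D built from a k-thin graph G with s colors, a node (r, {β_i^j}) in layer N_r is reachable from some node in layer N_0 if and only if the induced subgraph G[{v_1, …, v_r}] admits a list coloring with lists L, under the additional constraints that for each color i and class j, color i is forbidden for the last β_i^j vertices of V^j ∩ {v_1, …, v_r} (with respect to the ordering). -/
/-!
Induction on `r`, peeling off the last vertex `r`. A constrained coloring of the first `r + 1`
vertices with `c r = i` is the same as `i ∈ L r`, `β i (cls r) = 0`, and a constrained coloring
of the first `r` vertices for the parameters `β̃`: for colors `i' ≠ i` the window of forbidden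
vertices of class `cls r` loses the vertex `r`, hence shrinks by one; for `i` itself, properness
at `r` forbids `i` on the earlier neighbours of `r`, which by consistency of the ordering are
exactly the last `|N(v_r, j)_<|` vertices of each class `j`, whence the `max`.
-/

/-- The earlier neighbours `N(v_r, j)_<` of vertex `x` in class `j`
(vertices are `0, 1, 2, …` in the consistent ordering). -/
def earlierNbrs {k : ℕ} (G : SimpleGraph ℕ) [DecidableRel G.Adj]
    (cls : ℕ → Fin k) (x : ℕ) (j : Fin k) : Finset ℕ :=
  (Finset.range x).filter (fun p => cls p = j ∧ G.Adj x p)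

/-- Reachability in the layered digraph `D`: `Reach G cls L r β` says that the node
`(r, {β_i^j})` of layer `N_r` is reachable from some node of layer `N_0 = L(v_1)`.
Layer `r` corresponds to the first `r` vertices `0, …, r-1`; an arc into layer `r+1`
colored `i` exists when `i ∈ L(v_{r+1})`, `β_i^{j(r+1)} = 0`, and its source node in
layer `r` has the parameters `β̃` of the paper. -/
inductive Reach {s k : ℕ} (G : SimpleGraph ℕ) [DecidableRel G.Adj]
    (cls : ℕ → Fin k) (L : ℕ → Finset (Fin s)) :
    ℕ → (Fin s → Fin k → ℕ) → Prop where
  | one (β : Fin s → Fin k → ℕ) (i : Fin s) (hi : i ∈ L 0) (hβ : β i (cls 0) = 0) :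
      Reach G cls L 1 β
  | step (r : ℕ) (hr : 1 ≤ r) (β : Fin s → Fin k → ℕ) (i : Fin s)
      (hi : i ∈ L r) (hβ : β i (cls r) = 0)
      (hprev : Reach G cls L r (fun i' j =>
        if i' = i then max (earlierNbrs G cls r j).card (β i' j)
        else if j = cls r then β i' j - 1 else β i' j)) :
      Reach G cls L (r + 1) β

open Finset

/-- Vertex `p` is among the last `b` vertices of its class below `r` iff
`rankFromEnd cls r p ≤ b`. -/
def rankFromEnd {k : ℕ} (cls : ℕ → Fin k) (r p : ℕ) : ℕ :=
  #{q ∈ Ico p r | cls q = cls p}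

def IsConsistentOrdering {k : ℕ} (G : SimpleGraph ℕ) (cls : ℕ → Fin k) : Prop :=
  ∀ p q r : ℕ, p < q → q < r → cls p = cls q → G.Adj r p → G.Adj r q

def IsConstrainedColoring {s k : ℕ} (G : SimpleGraph ℕ) (cls : ℕ → Fin k)
    (L : ℕ → Finset (Fin s)) (r : ℕ) (β : Fin s → Fin k → ℕ) (c : ℕ → Fin s) : Prop :=
  (∀ p < r, c p ∈ L p) ∧
  (∀ p q : ℕ, p < r → q < r → G.Adj p q → c p ≠ c q) ∧
  (∀ p < r, ∀ i : Fin s, rankFromEnd cls r p ≤ β i (cls p) → c p ≠ i)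

/-- The parameters `β̃` of the source of an arc colored `i` into the node `(r + 1, β)`. -/
def sourceParams {s k : ℕ} (G : SimpleGraph ℕ) [DecidableRel G.Adj] (cls : ℕ → Fin k)
    (r : ℕ) (i : Fin s) (β : Fin s → Fin k → ℕ) : Fin s → Fin k → ℕ :=
  fun i' j =>
    if i' = i then max #(earlierNbrs G cls r j) (β i' j)
    else if j = cls r then β i' j - 1 else β i' j

section

variable {s k : ℕ} {G : SimpleGraph ℕ} {cls : ℕ → Fin k} {L : ℕ → Finset (Fin s)}

lemma rankFromEnd_succ_self (p : ℕ) : rankFromEnd cls (p + 1) p = 1 := by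
  simp [rankFromEnd, filter_singleton]

lemma one_le_rankFromEnd {p r : ℕ} (hpr : p < r) : 1 ≤ rankFromEnd cls r p :=
  card_pos.mpr ⟨p, by simp [hpr]⟩

lemma rankFromEnd_succ {p r : ℕ} (hpr : p ≤ r) :
    rankFromEnd cls (r + 1) p = rankFromEnd cls r p + if cls r = cls p then 1 else 0 := by
  rw [rankFromEnd, rankFromEnd, Nat.Ico_succ_right_eq_insert_Ico hpr, filter_insert]
  split_ifs <;> simp

lemma IsConstrainedColoring.congr {r : ℕ} {β : Fin s → Fin k → ℕ} {c c' : ℕ → Fin s}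
    (hc : IsConstrainedColoring G cls L r β c) (heq : ∀ p < r, c p = c' p) :
    IsConstrainedColoring G cls L r β c' := by
  obtain ⟨hL, hproper, hforbid⟩ := hc
  refine ⟨fun p hp => heq p hp ▸ hL p hp, fun p q hp hq hadj => ?_, fun p hp i hle => ?_⟩
  · rw [← heq p hp, ← heq q hq]
    exact hproper p q hp hq hadj
  · rw [← heq p hp]
    exact hforbid p hp i hle

variable [DecidableRel G.Adj]

lemma reach_one_iff {β : Fin s → Fin k → ℕ} :
    Reach G cls L 1 β ↔ ∃ i ∈ L 0, β i (cls 0) = 0 := by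
  constructor
  · rintro (⟨_, i, hi, hβ⟩ | ⟨_, _, _, _, _, _, _⟩)
    · exact ⟨i, hi, hβ⟩
    · omega
  · rintro ⟨i, hi, hβ⟩
    exact .one β i hi hβ

lemma reach_succ_iff {r : ℕ} (hr : 1 ≤ r) {β : Fin s → Fin k → ℕ} :
    Reach G cls L (r + 1) β ↔
      ∃ i ∈ L r, β i (cls r) = 0 ∧ Reach G cls L r (sourceParams G cls r i β) := by
  constructor
  · rintro (_ | ⟨_, _, _, i, hi, hβ, hprev⟩)
    · omega
    · exact ⟨i, hi, hβ, hprev⟩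
  · rintro ⟨i, hi, hβ, hprev⟩
    exact .step r hr β i hi hβ hprev

/-- In a consistent ordering the earlier neighbours of `r` in a class are the last vertices of
that class below `r`. -/
lemma IsConsistentOrdering.rankFromEnd_le_card_earlierNbrs_iff
    (hcons : IsConsistentOrdering G cls) {p r : ℕ} (hpr : p < r) :
    rankFromEnd cls r p ≤ #(earlierNbrs G cls r (cls p)) ↔ G.Adj r p := by
  constructor
  · intro hle
    by_contra hpr_adj
    have hsub : earlierNbrs G cls r (cls p) ⊆ {q ∈ Ico p r | cls q = cls p}.erase p := by
      intro q hq
      simp only [earlierNbrs, mem_filter, mem_range, mem_erase, mem_Ico] at hq ⊢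
      obtain ⟨hqr, hcls, hadj⟩ := hq
      refine ⟨fun hqp => hpr_adj (hqp ▸ hadj), ⟨?_, hqr⟩, hcls⟩
      by_contra! hqp
      exact hpr_adj (hcons q p r hqp hpr hcls hadj)
    have hcard := card_le_card hsub
    rw [card_erase_of_mem (by simp [hpr])] at hcard
    have hpos := one_le_rankFromEnd (cls := cls) hpr
    unfold rankFromEnd at *
    omega
  · intro hadj
    refine card_le_card fun q hq => ?_
    simp only [earlierNbrs, mem_filter, mem_range, mem_Ico] at hq ⊢
    obtain ⟨⟨hpq, hqr⟩, hcls⟩ := hq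
    refine ⟨hqr, hcls, ?_⟩
    rcases hpq.eq_or_lt with rfl | hpq
    · exact hadj
    · exact hcons p q r hpq hqr hcls.symm hadj

lemma IsConsistentOrdering.rankFromEnd_le_sourceParams_iff
    (hcons : IsConsistentOrdering G cls) {p r : ℕ} (hpr : p < r) {β : Fin s → Fin k → ℕ}
    {i₀ : Fin s} (hβ : β i₀ (cls r) = 0) (i : Fin s) :
    rankFromEnd cls r p ≤ sourceParams G cls r i₀ β i (cls p) ↔
      rankFromEnd cls (r + 1) p ≤ β i (cls p) ∨ (i = i₀ ∧ G.Adj r p) := by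
  have hsucc := rankFromEnd_succ (cls := cls) hpr.le
  have hpos := one_le_rankFromEnd (cls := cls) hpr
  rw [← hcons.rankFromEnd_le_card_earlierNbrs_iff hpr]
  unfold sourceParams
  by_cases hi : i = i₀ <;> by_cases hcls : cls r = cls p
  · subst hi; rw [← hcls] at *; simp_all
  · simp_all [or_comm]
  · simp_all; omega
  · simp_all [Ne.symm hcls]

lemma IsConsistentOrdering.isConstrainedColoring_succ_iff (hcons : IsConsistentOrdering G cls)
    {r : ℕ} {β : Fin s → Fin k → ℕ} {c : ℕ → Fin s} :
    IsConstrainedColoring G cls L (r + 1) β c ↔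
      c r ∈ L r ∧ β (c r) (cls r) = 0 ∧
        IsConstrainedColoring G cls L r (sourceParams G cls r (c r) β) c := by
  constructor
  · rintro ⟨hL, hproper, hforbid⟩
    have hβ : β (c r) (cls r) = 0 := by
      by_contra! h
      exact hforbid r r.lt_succ_self (c r) (by rw [rankFromEnd_succ_self]; omega) rfl
    refine ⟨hL r r.lt_succ_self, hβ, fun p hp => hL p (by omega),
      fun p q hp hq => hproper p q (by omega) (by omega), fun p hp i hle => ?_⟩
    rcases (hcons.rankFromEnd_le_sourceParams_iff hp hβ i).1 hle with hle | ⟨rfl, hadj⟩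
    · exact hforbid p (by omega) i hle
    · exact hproper p r (by omega) r.lt_succ_self hadj.symm
  · rintro ⟨hLr, hβ, hL, hproper, hforbid⟩
    have hcr : ∀ q < r, G.Adj r q → c r ≠ c q := fun q hq hadj heq =>
      hforbid q hq (c r) ((hcons.rankFromEnd_le_sourceParams_iff hq hβ _).2 (.inr ⟨rfl, hadj⟩))
        heq.symm
    refine ⟨fun p hp => ?_, fun p q hp hq hadj => ?_, fun p hp i hle => ?_⟩
    · rcases Nat.lt_succ_iff_lt_or_eq.1 hp with hp | rfl
      exacts [hL p hp, hLr]
    · rcases Nat.lt_succ_iff_lt_or_eq.1 hp with hp | rfl <;>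
        rcases Nat.lt_succ_iff_lt_or_eq.1 hq with hq | rfl
      · exact hproper p q hp hq hadj
      · exact (hcr p hp hadj.symm).symm
      · exact hcr q hq hadj
      · exact absurd hadj (G.loopless.irrefl _)
    · rcases Nat.lt_succ_iff_lt_or_eq.1 hp with hp | rfl
      · exact hforbid p hp i ((hcons.rankFromEnd_le_sourceParams_iff hp hβ i).2 (.inl hle))
      · rintro rfl
        rw [rankFromEnd_succ_self, hβ] at hle
        omega

lemma IsConsistentOrdering.exists_isConstrainedColoring_succ_iff
    (hcons : IsConsistentOrdering G cls) {r : ℕ} {β : Fin s → Fin k → ℕ} :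
    (∃ c, IsConstrainedColoring G cls L (r + 1) β c) ↔
      ∃ i ∈ L r, β i (cls r) = 0 ∧
        ∃ c, IsConstrainedColoring G cls L r (sourceParams G cls r i β) c := by
  simp_rw [hcons.isConstrainedColoring_succ_iff]
  constructor
  · rintro ⟨c, hLr, hβ, hc⟩
    exact ⟨c r, hLr, hβ, c, hc⟩
  · rintro ⟨i, hi, hβ, c, hc⟩
    refine ⟨Function.update c r i, by simpa using hi, by simpa using hβ, ?_⟩
    rw [Function.update_self]
    exact hc.congr fun p hp => (Function.update_of_ne hp.ne _ _).symm

lemma IsConsistentOrdering.reach_iff_exists_isConstrainedColoring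
    (hcons : IsConsistentOrdering G cls) {r : ℕ} (hr : 1 ≤ r) (β : Fin s → Fin k → ℕ) :
    Reach G cls L r β ↔ ∃ c, IsConstrainedColoring G cls L r β c := by
  induction r, hr using Nat.le_induction generalizing β with
  | base =>
    rw [reach_one_iff, hcons.exists_isConstrainedColoring_succ_iff]
    refine exists_congr fun i => and_congr_right fun _ => (and_iff_left ⟨fun _ => i, ?_⟩).symm
    simp [IsConstrainedColoring]
  | succ r hr ih =>
    simp_rw [reach_succ_iff hr, hcons.exists_isConstrainedColoring_succ_iff, ih]

end

theorem reach_iff_constrained_coloring_general {s k : ℕ}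
    (G : SimpleGraph ℕ) [DecidableRel G.Adj]
    (cls : ℕ → Fin k) (L : ℕ → Finset (Fin s))
    (hcons : ∀ p q r : ℕ, p < q → q < r → cls p = cls q → G.Adj r p → G.Adj r q)
    (r : ℕ) (hr1 : 1 ≤ r)
    (β : Fin s → Fin k → ℕ) :
    Reach G cls L r β ↔
      ∃ c : ℕ → Fin s,
        (∀ p < r, c p ∈ L p) ∧
        (∀ p q : ℕ, p < r → q < r → G.Adj p q → c p ≠ c q) ∧
        (∀ p < r, ∀ i : Fin s,
          ((Finset.Ico p r).filter (fun q => cls q = cls p)).card ≤ β i (cls p) →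
            c p ≠ i) :=
  IsConsistentOrdering.reach_iff_exists_isConstrainedColoring hcons hr1 β

/-- A node `(r, {β_i^j})` of the layered digraph is reachable from layer `N_0` iff the
induced subgraph on the first `r` vertices admits a list coloring respecting `L` with the
additional constraint that color `i` is forbidden on the last `β_i^j` vertices of class
`j` among the first `r` vertices. -/
theorem reach_iff_constrained_coloring {s k n : ℕ}
    (G : SimpleGraph ℕ) [DecidableRel G.Adj]
    (cls : ℕ → Fin k) (L : ℕ → Finset (Fin s))
    (hcons : ∀ p q r : ℕ, p < q → q < r → cls p = cls q → G.Adj r p → G.Adj r q)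
    (r : ℕ) (hr1 : 1 ≤ r) (hrn : r ≤ n)
    (β : Fin s → Fin k → ℕ)
    (hnode : ∀ (i : Fin s) (j : Fin k),
      β i j ≤ (Finset.range n).sup (fun x => (earlierNbrs G cls x j).card)) :
    Reach G cls L r β ↔
      ∃ c : ℕ → Fin s,
        (∀ p < r, c p ∈ L p) ∧
        (∀ p q : ℕ, p < r → q < r → G.Adj p q → c p ≠ c q) ∧
        (∀ p < r, ∀ i : Fin s,
          ((Finset.Ico p r).filter (fun q => cls q = cls p)).card ≤ β i (cls p) →
            c p ≠ i) :=
  reach_iff_constrained_coloring_general G cls L hcons r hr1 β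
end
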